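/- Assume R is a principal ideal domain and let (c,d) ∈ S with c ≠ 0. Then V_{c,d} ∩ F is compact. -/

import Mathlib

noncomputable section

open scoped Classical
open MeasureTheory

namespace Hilbert

/-- `k₀ = 2` if `k ≡ 1 (mod 4)` and `k₀ = 1` otherwise. -/
def k0 (k : ℕ) : ℝ := if k % 4 = 1 then 2 else 1

/-- `ω = (1 + √k)/k₀`. -/
def omg (k : ℕ) : ℝ := (1 + Real.sqrt k) / k0 k

/-- `ω' = (1 - √k)/k₀`, the algebraic conjugate of `ω`. -/
def omg' (k : ℕ) : ℝ := (1 - Real.sqrt k) / k0 k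

/-- The ring `R = ℤ[ω]`, realized inside `ℝ × ℝ` via the pair of real embeddings
`α ↦ (α, α')` of `K = ℚ(√k)`. -/
def R (k : ℕ) : Subring (ℝ × ℝ) := Subring.closure {(omg k, omg' k)}

/-- The ambient space `ℝ⁴`, with coordinates `(x₁, x₂, y₁, y₂)`. -/
abbrev Pt : Type := ℝ × ℝ × ℝ × ℝ

def x1 (p : Pt) : ℝ := p.1
def x2 (p : Pt) : ℝ := p.2.1
def y1 (p : Pt) : ℝ := p.2.2.1
def y2 (p : Pt) : ℝ := p.2.2.2

/-- `H² × H²`, identified with an open subset of `ℝ⁴`. -/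
def HH : Set Pt := {p | 0 < y1 p ∧ 0 < y2 p}

/-- The coordinate `s₁`, determined by `x₁ = s₁ + s₂ ω`, `x₂ = s₁ + s₂ ω'`. -/
def s1 (k : ℕ) (p : Pt) : ℝ := (omg' k * x1 p - omg k * x2 p) / (omg' k - omg k)

/-- The coordinate `s₂`. -/
def s2 (k : ℕ) (p : Pt) : ℝ := (x1 p - x2 p) / (omg k - omg' k)

/-- The ratio `r = y₁/y₂`. -/
def rr (p : Pt) : ℝ := y1 p / y2 p

/-- The height `h = y₁ y₂`. -/
def hh (p : Pt) : ℝ := y1 p * y2 p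

/-- `‖cZ+d‖ = ((cx₁+d)² + c²y₁²)((c'x₂+d')² + c'²y₂²)`, where `c = (c, c')`, `d = (d, d')`
are given by their two real embeddings. -/
def HNorm (c d : ℝ × ℝ) (p : Pt) : ℝ :=
  ((c.1 * x1 p + d.1) ^ 2 + c.1 ^ 2 * y1 p ^ 2) *
    ((c.2 * x2 p + d.2) ^ 2 + c.2 ^ 2 * y2 p ^ 2)

/-- `S = {(c,d) ∈ R² : cR + dR = R}`. -/
def Spairs (k : ℕ) : Set (R k × R k) := {cd | Ideal.span {cd.1, cd.2} = ⊤}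

/-- `V_{c,d}^≥ = {Z ∈ H²×H² : ‖cZ+d‖ ≥ 1}`. -/
def Vge (k : ℕ) (cd : R k × R k) : Set Pt :=
  {p ∈ HH | 1 ≤ HNorm (cd.1 : ℝ × ℝ) (cd.2 : ℝ × ℝ) p}

/-- `V_{c,d}^≤ = {Z ∈ H²×H² : ‖cZ+d‖ ≤ 1}`. -/
def Vle (k : ℕ) (cd : R k × R k) : Set Pt :=
  {p ∈ HH | HNorm (cd.1 : ℝ × ℝ) (cd.2 : ℝ × ℝ) p ≤ 1}

/-- `V_{c,d} = {Z ∈ H²×H² : ‖cZ+d‖ = 1}`. -/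
def Veq (k : ℕ) (cd : R k × R k) : Set Pt :=
  {p ∈ HH | HNorm (cd.1 : ℝ × ℝ) (cd.2 : ℝ × ℝ) p = 1}

/-- `F₀ = {Z ∈ H²×H² : ‖cZ+d‖ ≥ 1 for all (c,d) ∈ S}`. -/
def F0 (k : ℕ) : Set Pt :=
  {p ∈ HH | ∀ cd ∈ Spairs k, 1 ≤ HNorm (cd.1 : ℝ × ℝ) (cd.2 : ℝ × ℝ) p}

/-- `F_∞ = {(s₁,s₂,r,h) : |s₁| ≤ 1/2, |s₂| ≤ 1/2, ε₀⁻² ≤ r ≤ ε₀²}`, where `ε` stands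
for the fundamental unit `ε₀`. -/
def FInf (k : ℕ) (ε : ℝ) : Set Pt :=
  {p ∈ HH | |s1 k p| ≤ 1 / 2 ∧ |s2 k p| ≤ 1 / 2 ∧ (ε ^ 2)⁻¹ ≤ rr p ∧ rr p ≤ ε ^ 2}

/-- `F = F_∞ ∩ F₀`. -/
def F (k : ℕ) (ε : ℝ) : Set Pt := FInf k ε ∩ F0 k

/-- `SL₂(R)`. -/
abbrev SL (k : ℕ) := Matrix.SpecialLinearGroup (Fin 2) (R k)

/-- Möbius action on the upper half-plane: image of `x + y i` under `(a b; c d)`. -/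
def moeb (a b c d x y : ℝ) : ℝ × ℝ :=
  (((a * x + b) * (c * x + d) + a * c * y ^ 2) / ((c * x + d) ^ 2 + c ^ 2 * y ^ 2),
    y / ((c * x + d) ^ 2 + c ^ 2 * y ^ 2))

/-- The action of `γ ∈ SL₂(R)` on `H²×H²`: `γ` acts on the first factor through the first
embedding and through the conjugate matrix `γ'` (second embedding) on the second factor.
This descends to the Hilbert modular group `PSL₂(R)`. -/
def act (k : ℕ) (g : SL k) (p : Pt) : Pt :=
  ((moeb (g.1 0 0 : ℝ × ℝ).1 (g.1 0 1 : ℝ × ℝ).1 (g.1 1 0 : ℝ × ℝ).1 (g.1 1 1 : ℝ × ℝ).1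
      (x1 p) (y1 p)).1,
   (moeb (g.1 0 0 : ℝ × ℝ).2 (g.1 0 1 : ℝ × ℝ).2 (g.1 1 0 : ℝ × ℝ).2 (g.1 1 1 : ℝ × ℝ).2
      (x2 p) (y2 p)).1,
   (moeb (g.1 0 0 : ℝ × ℝ).1 (g.1 0 1 : ℝ × ℝ).1 (g.1 1 0 : ℝ × ℝ).1 (g.1 1 1 : ℝ × ℝ).1
      (x1 p) (y1 p)).2,
   (moeb (g.1 0 0 : ℝ × ℝ).2 (g.1 0 1 : ℝ × ℝ).2 (g.1 1 0 : ℝ × ℝ).2 (g.1 1 1 : ℝ × ℝ).2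
      (x2 p) (y2 p)).2)

/-- The pair of real embeddings of a unit of `R`. -/
def unitVal (k : ℕ) (u : (R k)ˣ) : ℝ × ℝ := ((u : R k) : ℝ × ℝ)

/-- `e` is the fundamental unit of `R`: the smallest unit of `R` greater than `1`
(with respect to the first embedding). -/
def IsFundUnit (k : ℕ) (e : (R k)ˣ) : Prop :=
  1 < (unitVal k e).1 ∧
    ∀ v : (R k)ˣ, 1 < (unitVal k v).1 → (unitVal k e).1 ≤ (unitVal k v).1

/-- The real number `ε₀ > 1`, the fundamental unit under the first embedding. -/
def eps (k : ℕ) (e : (R k)ˣ) : ℝ := (unitVal k e).1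


/-- The norm `N(c) = c c'` of an element of `R` (as a real number). -/
def Nm (k : ℕ) (c : R k) : ℝ := ((c : ℝ × ℝ)).1 * ((c : ℝ × ℝ)).2

/-- A subset `C` of `H²×H²` is hyperbolically bounded if it is bounded in the
Euclidean metric and `y₁, y₂ > ε` on `C` for some `ε > 0`. -/
def HypBounded (C : Set Pt) : Prop :=
  C ⊆ HH ∧ Bornology.IsBounded C ∧ ∃ ε > (0 : ℝ), ∀ p ∈ C, ε < y1 p ∧ ε < y2 p

/-- `V_{C,μ} = {(c,d) ∈ R × R : ‖cZ+d‖ ≤ μ for some Z ∈ C}`. -/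
def VCmu (k : ℕ) (C : Set Pt) (μ : ℝ) : Set (R k × R k) :=
  {cd | ∃ p ∈ C, HNorm (cd.1 : ℝ × ℝ) (cd.2 : ℝ × ℝ) p ≤ μ}

/-- The conditions (8) of Theorem `FiniteSides` on a pair `(c,d) ∈ R²`. -/
def SCond (k : ℕ) (ε : ℝ) (cd : R k × R k) : Prop :=
  cd.1 ≠ 0 ∧ Ideal.span {cd.1, cd.2} = ⊤ ∧
    |Nm k cd.1| ≤ 2 * k / (k0 k) ^ 2 ∧
    |((cd.2 : ℝ × ℝ)).1 / ((cd.1 : ℝ × ℝ)).1| <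
      ε * Real.sqrt (2 * k / (Nm k cd.1 ^ 2 * (k0 k) ^ 2) - (k0 k) ^ 2 / (2 * k)) +
        (1 + omg k) / 2 ∧
    |((cd.2 : ℝ × ℝ)).2 / ((cd.1 : ℝ × ℝ)).2| <
      ε * Real.sqrt (2 * k / (Nm k cd.1 ^ 2 * (k0 k) ^ 2) - (k0 k) ^ 2 / (2 * k)) +
        (1 - omg' k) / 2

/-- `S₁` is a set of representatives, up to multiplication by units of `R`, of the pairs
`(c,d) ∈ R²` satisfying the conditions `SCond`. -/
def IsRepSet (k : ℕ) (ε : ℝ) (S1 : Set (R k × R k)) : Prop :=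
  (∀ cd ∈ S1, SCond k ε cd) ∧
    (∀ cd : R k × R k, SCond k ε cd →
      ∃ ab ∈ S1, ∃ u : (R k)ˣ, cd.1 = (u : R k) * ab.1 ∧ cd.2 = (u : R k) * ab.2) ∧
    (∀ ab ∈ S1, ∀ ab' ∈ S1,
      (∃ u : (R k)ˣ, ab'.1 = (u : R k) * ab.1 ∧ ab'.2 = (u : R k) * ab.2) → ab = ab')

/-- The family `𝒱_∞ = {V_i^± : i = 1,2,3}`. -/
def VfamInf (k : ℕ) (ε : ℝ) : Set (Set Pt) :=
  { {p ∈ HH | s1 k p = 1 / 2}, {p ∈ HH | s1 k p = -(1 / 2)},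
    {p ∈ HH | s2 k p = 1 / 2}, {p ∈ HH | s2 k p = -(1 / 2)},
    {p ∈ HH | rr p = ε ^ 2}, {p ∈ HH | rr p = (ε ^ 2)⁻¹} }

/-- The family `𝒱 = {V_{c,d} : (c,d) ∈ S, c ≠ 0}`. -/
def Vfam (k : ℕ) : Set (Set Pt) :=
  {V | ∃ cd ∈ Spairs k, cd.1 ≠ 0 ∧ V = Veq k cd}

/-- The family `𝓜 = {γ(M) : γ ∈ Γ, M ∈ 𝒱 ∪ 𝒱_∞}`. -/
def Mfam (k : ℕ) (ε : ℝ) : Set (Set Pt) :=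
  {M | ∃ g : SL k, ∃ V ∈ Vfam k ∪ VfamInf k ε, M = act k g '' V}

/-- `ω` as an element of `R`. -/
def omR (k : ℕ) : R k := ⟨(omg k, omg' k), Subring.subset_closure rfl⟩

/-- The side-pairing transformations: `γ ≠ 1` (in `PSL₂(R)`) such that `F ∩ γ⁻¹(F)` has
Hausdorff dimension `3`. -/
def SidePairings (k : ℕ) (ε : ℝ) : Set (SL k) :=
  {g | g ≠ 1 ∧ g.1 ≠ -1 ∧ dimH (F k ε ∩ act k g⁻¹ '' F k ε) = 3}


/-!
On `V_{c,d}` the height `h = y₁y₂` satisfies `(N(c) h)² ≤ ‖cZ+d‖ = 1`, and `|N(c)| ≥ 1` because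
`√k` is irrational, so `h ≤ 1`; on `F_∞` the ratio bounds give `yᵢ² ≤ ε₀² h`, and `|s₁|, |s₂| ≤ 1/2`
bound `x₁, x₂`. Hence `V_{c,d} ∩ F` is bounded.

It is also closed, because `h` is bounded below on `F`. If `h` were tiny, simultaneous Dirichlet
approximation of `(s₁, s₂)` would give `q ∈ ℤ` and `d = m + nω` with `‖qZ + d‖ < 1`. As `R` is a
principal ideal domain, `(q, d) = g (c₀, d₀)` with `(c₀, d₀) ∈ S`, and
`‖qZ + d‖ = N(g)² ‖c₀Z + d₀‖ ≥ 1` on `F₀`. So `V_{c,d} ∩ F` stays in a region where `y₁, y₂` are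
bounded away from `0`, on which all its defining conditions are closed.
-/

theorem exists_eq_mul_and_isCoprime {A : Type*} [CommRing A] [IsDomain A] [IsBezout A]
    (x y : A) : ∃ g x' y', x = g * x' ∧ y = g * y' ∧ IsCoprime x' y' := by
  classical
  let := IsBezout.toGCDDomain A
  obtain ⟨x', y', hx, hy, hu⟩ := extract_gcd x y
  exact ⟨_, x', y', hx, hy, isRelPrime_iff_isCoprime.1 (gcd_isUnit_iff_isRelPrime.1 hu)⟩

lemma abs_fract_sub_fract_lt {Q : ℕ} (hQ : 0 < Q) {a b : ℝ}
    (h : ⌊Int.fract a * Q⌋ = ⌊Int.fract b * Q⌋) : |Int.fract b - Int.fract a| < 1 / Q := by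
  have hQ' : (0 : ℝ) < Q := by exact_mod_cast hQ
  have := Int.abs_sub_lt_one_of_floor_eq_floor h.symm
  rwa [← sub_mul, abs_mul, abs_of_pos hQ', ← lt_div_iff₀ hQ'] at this

lemma floor_fract_mul_mem_Ico {Q : ℕ} (hQ : 0 < Q) (x : ℝ) :
    ⌊Int.fract x * Q⌋ ∈ Finset.Ico (0 : ℤ) Q := by
  have hQ' : (0 : ℝ) < Q := by exact_mod_cast hQ
  rw [Finset.mem_Ico, Int.floor_nonneg, Int.floor_lt]
  exact ⟨by positivity, by simpa using mul_lt_of_lt_one_left hQ' (Int.fract_lt_one x)⟩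

/-- Simultaneous Dirichlet approximation, by pigeonhole on `j ↦ (⌊{j s} Q⌋, ⌊{j t} Q⌋)`. -/
theorem exists_int_abs_mul_add_le_and_abs_mul_add_le (s t : ℝ) {Q : ℕ} (hQ : 0 < Q) :
    ∃ q m n : ℤ, 0 < q ∧ q ≤ Q ^ 2 ∧ |q * s + m| ≤ 1 / Q ∧ |q * t + n| ≤ 1 / Q := by
  let f : ℕ → ℤ × ℤ := fun j => (⌊Int.fract (j * s) * Q⌋, ⌊Int.fract (j * t) * Q⌋)
  have hf : ∀ j ∈ Finset.range (Q ^ 2 + 1), f j ∈ Finset.Ico (0 : ℤ) Q ×ˢ Finset.Ico (0 : ℤ) Q :=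
    fun j _ => Finset.mem_product.2 ⟨floor_fract_mul_mem_Ico hQ _, floor_fract_mul_mem_Ico hQ _⟩
  have hcard : (Finset.Ico (0 : ℤ) Q ×ˢ Finset.Ico (0 : ℤ) Q).card
      < (Finset.range (Q ^ 2 + 1)).card := by
    simp [sq]
  obtain ⟨i, hi, j, hj, hij, hfij⟩ := Finset.exists_ne_map_eq_of_card_lt_of_maps_to hcard hf
  wlog hlt : i < j generalizing i j
  · exact this j hj i hi hij.symm hfij.symm (lt_of_le_of_ne (not_lt.1 hlt) hij.symm)
  simp only [Finset.mem_range, Prod.ext_iff, f] at hj hfij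
  have key : ∀ u : ℝ, (((j - i : ℤ) : ℝ) * u + ((⌊i * u⌋ - ⌊j * u⌋ : ℤ) : ℝ)) =
      Int.fract (j * u) - Int.fract (i * u) := fun u => by
    simp only [Int.fract]; push_cast; ring
  have hjQ : (j : ℤ) ≤ Q ^ 2 := by exact_mod_cast Nat.lt_succ_iff.1 hj
  refine ⟨j - i, ⌊i * s⌋ - ⌊j * s⌋, ⌊i * t⌋ - ⌊j * t⌋, by omega, by omega, ?_, ?_⟩
  · rw [key]; exact (abs_fract_sub_fract_lt hQ hfij.1).le
  · rw [key]; exact (abs_fract_sub_fract_lt hQ hfij.2).le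

lemma abs_add_mul_le_of_abs_le_half {s₁ s₂ w : ℝ} (h₁ : |s₁| ≤ 1 / 2) (h₂ : |s₂| ≤ 1 / 2) :
    |s₁ + s₂ * w| ≤ (1 + |w|) / 2 :=
  calc |s₁ + s₂ * w| ≤ |s₁| + |s₂| * |w| := (abs_add_le _ _).trans_eq (by rw [abs_mul])
    _ ≤ 1 / 2 + 1 / 2 * |w| := by gcongr
    _ = (1 + |w|) / 2 := by ring

lemma mul_add_sq_add_sq_le_half {Q q x s₁ s₂ w m n y : ℝ} (hx : x = s₁ + s₂ * w)
    (hQ : 2 * (1 + |w|) ≤ Q) (h₁ : |q * s₁ + m| ≤ 1 / Q) (h₂ : |q * s₂ + n| ≤ 1 / Q)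
    (hy : q ^ 2 * y ^ 2 ≤ 1 / 4) : (q * x + (m + n * w)) ^ 2 + q ^ 2 * y ^ 2 ≤ 1 / 2 := by
  have hQ0 : 0 < Q := lt_of_lt_of_le (by positivity) hQ
  have habs : |q * x + (m + n * w)| ≤ 1 / 2 :=
    calc |q * x + (m + n * w)| = |(q * s₁ + m) + (q * s₂ + n) * w| := by rw [hx]; ring_nf
      _ ≤ |q * s₁ + m| + |q * s₂ + n| * |w| := (abs_add_le _ _).trans_eq (by rw [abs_mul])
      _ ≤ 1 / Q + 1 / Q * |w| := by gcongr
      _ = (1 + |w|) / Q := by ring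
      _ ≤ 1 / 2 := by rw [div_le_div_iff₀ hQ0 two_pos]; linarith
  nlinarith [sq_abs (q * x + (m + n * w)), abs_nonneg (q * x + (m + n * w))]

section

variable {k : ℕ}

lemma irrational_sqrt_of_squarefree (hk : Squarefree k) (hk1 : 1 < k) : Irrational √k := by
  rw [irrational_sqrt_natCast_iff]
  rintro ⟨m, hm⟩
  have := Nat.isUnit_iff.1 (hk m (by rw [hm]))
  subst this
  omega

lemma k0_eq_natCast (k : ℕ) : k0 k = ((if k % 4 = 1 then 2 else 1 : ℕ) : ℝ) := by
  unfold k0; split_ifs <;> norm_num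

lemma irrational_omg (hk : Irrational √k) : Irrational (omg k) := by
  rw [omg, k0_eq_natCast]
  exact_mod_cast (hk.natCast_add 1).div_natCast (m := if k % 4 = 1 then 2 else 1)
    (by split_ifs <;> simp)

lemma irrational_omg' (hk : Irrational √k) : Irrational (omg' k) := by
  rw [omg', k0_eq_natCast]
  exact_mod_cast (hk.natCast_sub 1).div_natCast (m := if k % 4 = 1 then 2 else 1)
    (by split_ifs <;> simp)

lemma exists_int_omg_add_omg'_and_omg_mul_omg' (k : ℕ) :
    ∃ t n : ℤ, omg k + omg' k = t ∧ omg k * omg' k = n := by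
  have hs : √(k : ℝ) ^ 2 = k := Real.sq_sqrt (Nat.cast_nonneg k)
  unfold omg omg' k0
  split_ifs with h
  · obtain ⟨j, rfl⟩ : ∃ j : ℕ, k = 4 * j + 1 := ⟨k / 4, by omega⟩
    refine ⟨1, -j, by ring, ?_⟩
    push_cast at hs ⊢
    linear_combination -hs / 4
  · exact ⟨2, 1 - k, by ring, by push_cast; linear_combination -hs⟩

lemma exists_int_of_mem_R {z : ℝ × ℝ} (hz : z ∈ R k) :
    ∃ a b : ℤ, z = (a + b * omg k, a + b * omg' k) := by
  obtain ⟨t, n, ht, hn⟩ := exists_int_omg_add_omg'_and_omg_mul_omg' k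
  induction hz using Subring.closure_induction with
  | mem x hx => exact ⟨0, 1, by rw [Set.mem_singleton_iff.1 hx]; simp⟩
  | zero => exact ⟨0, 0, by ext <;> simp⟩
  | one => exact ⟨1, 0, by ext <;> simp⟩
  | add x y _ _ ihx ihy =>
    obtain ⟨a, b, rfl⟩ := ihx
    obtain ⟨a', b', rfl⟩ := ihy
    exact ⟨a + a', b + b', by push_cast; ext <;> simp <;> ring⟩
  | neg x _ ihx =>
    obtain ⟨a, b, rfl⟩ := ihx
    exact ⟨-a, -b, by push_cast; ext <;> simp <;> ring⟩
  | mul x y _ _ ihx ihy =>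
    obtain ⟨a, b, rfl⟩ := ihx
    obtain ⟨a', b', rfl⟩ := ihy
    refine ⟨a * a' - b * b' * n, a * b' + a' * b + b * b' * t, ?_⟩
    ext <;> push_cast <;> simp only [Prod.fst_mul, Prod.snd_mul]
    · linear_combination (b * b' : ℝ) * (omg k * ht - hn)
    · linear_combination (b * b' : ℝ) * (omg' k * ht - hn)

lemma fst_ne_zero_and_snd_ne_zero_of_mem_R (hk : Irrational √k) {z : ℝ × ℝ} (hz : z ∈ R k)
    (h0 : z ≠ 0) : z.1 ≠ 0 ∧ z.2 ≠ 0 := by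
  obtain ⟨a, b, rfl⟩ := exists_int_of_mem_R hz
  by_cases hb : b = 0
  · subst hb
    have ha : (a : ℝ) ≠ 0 := fun ha => h0 (by simp [ha])
    simpa using ha
  · exact ⟨((irrational_omg hk).intCast_mul hb).intCast_add a |>.ne_zero,
      ((irrational_omg' hk).intCast_mul hb).intCast_add a |>.ne_zero⟩

lemma one_le_sq_fst_mul_snd_of_mem_R (hk : Irrational √k) {z : ℝ × ℝ} (hz : z ∈ R k)
    (h0 : z ≠ 0) : 1 ≤ (z.1 * z.2) ^ 2 := by
  obtain ⟨hz1, hz2⟩ := fst_ne_zero_and_snd_ne_zero_of_mem_R hk hz h0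
  obtain ⟨a, b, rfl⟩ := exists_int_of_mem_R hz
  obtain ⟨t, n, ht, hn⟩ := exists_int_omg_add_omg'_and_omg_mul_omg' k
  dsimp only at hz1 hz2 ⊢
  have hN : (a + b * omg k) * (a + b * omg' k) = ((a ^ 2 + a * b * t + b ^ 2 * n : ℤ) : ℝ) := by
    push_cast
    linear_combination (a * b : ℝ) * ht + (b ^ 2 : ℝ) * hn
  have hN0 : a ^ 2 + a * b * t + b ^ 2 * n ≠ 0 := by exact_mod_cast hN ▸ mul_ne_zero hz1 hz2
  rw [hN]
  exact_mod_cast one_le_sq_iff_one_le_abs _ |>.2 (Int.one_le_abs hN0)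

lemma noZeroDivisors_R (hk : Irrational √k) : NoZeroDivisors (R k) := by
  refine ⟨fun {x y} hxy => ?_⟩
  by_contra! h
  have hx := (fst_ne_zero_and_snd_ne_zero_of_mem_R hk x.2 (by exact_mod_cast h.1)).1
  have hy := (fst_ne_zero_and_snd_ne_zero_of_mem_R hk y.2 (by exact_mod_cast h.2)).1
  exact mul_ne_zero hx hy (by simpa using congrArg (fun z : R k => (z : ℝ × ℝ).1) hxy)

lemma HNorm_mul (g c d : ℝ × ℝ) (p : Pt) :
    HNorm (g * c) (g * d) p = (g.1 * g.2) ^ 2 * HNorm c d p := by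
  simp only [HNorm, Prod.fst_mul, Prod.snd_mul]
  ring

lemma one_le_HNorm_of_mem_F0 (hk : Irrational √k) (hPID : IsPrincipalIdealRing (R k))
    {p : Pt} (hp : p ∈ F0 k) {c d : R k} (hc : c ≠ 0) : 1 ≤ HNorm c d p := by
  have := noZeroDivisors_R hk
  have : IsDomain (R k) := NoZeroDivisors.to_isDomain _
  obtain ⟨g, c₀, d₀, rfl, rfl, hcop⟩ := exists_eq_mul_and_isCoprime c d
  have hg : (g : ℝ × ℝ) ≠ 0 := by exact_mod_cast left_ne_zero_of_mul hc
  have hS : (c₀, d₀) ∈ Spairs k := (Ideal.eq_top_iff_one _).2 (Ideal.mem_span_pair.2 hcop)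
  rw [Subring.coe_mul, Subring.coe_mul, HNorm_mul]
  exact one_le_mul_of_one_le_of_one_le (one_le_sq_fst_mul_snd_of_mem_R hk g.2 hg) (hp.2 _ hS)

@[fun_prop] lemma continuous_x1 : Continuous x1 := by unfold x1; fun_prop
@[fun_prop] lemma continuous_x2 : Continuous x2 := by unfold x2; fun_prop
@[fun_prop] lemma continuous_y1 : Continuous y1 := by unfold y1; fun_prop
@[fun_prop] lemma continuous_y2 : Continuous y2 := by unfold y2; fun_prop
@[fun_prop] lemma continuous_s1 : Continuous (s1 k) := by unfold s1; fun_prop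
@[fun_prop] lemma continuous_s2 : Continuous (s2 k) := by unfold s2; fun_prop
@[fun_prop] lemma continuous_hh : Continuous hh := by unfold hh; fun_prop
@[fun_prop] lemma continuous_HNorm (c d : ℝ × ℝ) : Continuous (HNorm c d) := by
  unfold HNorm; fun_prop

lemma omg_sub_omg'_ne_zero (hk : Irrational √k) : omg k - omg' k ≠ 0 := by
  have : k0 k ≠ 0 := by unfold k0; split_ifs <;> norm_num
  rw [omg, omg', ← sub_div, add_sub_sub_cancel, div_ne_zero_iff]
  exact ⟨by simpa using hk.ne_zero, this⟩

lemma x1_eq_s1_add_s2_mul (hk : Irrational √k) (p : Pt) : x1 p = s1 k p + s2 k p * omg k := by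
  have h := omg_sub_omg'_ne_zero hk
  have h' : omg' k - omg k ≠ 0 := by rwa [← neg_sub, neg_ne_zero]
  unfold s1 s2
  field_simp
  ring

lemma x2_eq_s1_add_s2_mul (hk : Irrational √k) (p : Pt) : x2 p = s1 k p + s2 k p * omg' k := by
  have h := omg_sub_omg'_ne_zero hk
  have h' : omg' k - omg k ≠ 0 := by rwa [← neg_sub, neg_ne_zero]
  unfold s1 s2
  field_simp
  ring

lemma sq_le_mul_hh_of_mem_FInf {ε : ℝ} {p : Pt} (hp : p ∈ FInf k ε) :
    y1 p ^ 2 ≤ ε ^ 2 * hh p ∧ y2 p ^ 2 ≤ ε ^ 2 * hh p := by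
  obtain ⟨⟨hy1, hy2⟩, -, -, hlo, hhi⟩ := hp
  have hε : 0 < ε ^ 2 := (div_pos hy1 hy2).trans_le hhi
  have h₁ : y1 p ≤ ε ^ 2 * y2 p := (div_le_iff₀ hy2).1 hhi
  have h₂ : y2 p ≤ ε ^ 2 * y1 p := (inv_mul_le_iff₀ hε).1 ((le_div_iff₀ hy2).1 hlo)
  unfold hh
  constructor <;> nlinarith

lemma sq_fst_mul_snd_mul_hh_le_HNorm (c d : ℝ × ℝ) (p : Pt) :
    (c.1 * c.2 * hh p) ^ 2 ≤ HNorm c d p := by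
  rw [show (c.1 * c.2 * hh p) ^ 2 = (c.1 ^ 2 * y1 p ^ 2) * (c.2 ^ 2 * y2 p ^ 2) by
    unfold hh; ring]
  exact mul_le_mul (le_add_of_nonneg_left (sq_nonneg _)) (le_add_of_nonneg_left (sq_nonneg _))
    (by positivity) (by positivity)

lemma hh_le_one_of_mem_Veq (hk : Irrational √k) {cd : R k × R k} (hc : cd.1 ≠ 0) {p : Pt}
    (hp : p ∈ Veq k cd) : hh p ≤ 1 := by
  have hN := one_le_sq_fst_mul_snd_of_mem_R hk cd.1.2 (by exact_mod_cast hc)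
  have hle := sq_fst_mul_snd_mul_hh_le_HNorm (cd.1 : ℝ × ℝ) (cd.2 : ℝ × ℝ) p
  rw [hp.2, mul_pow] at hle
  have h0 : 0 ≤ hh p := mul_nonneg hp.1.1.le hp.1.2.le
  nlinarith

lemma isBounded_Veq_inter_FInf (hk : Irrational √k) {cd : R k × R k} (hc : cd.1 ≠ 0) (ε : ℝ) :
    Bornology.IsBounded (Veq k cd ∩ FInf k ε) := by
  refine (Metric.isBounded_Icc
    ((-((1 + |omg k|) / 2), -((1 + |omg' k|) / 2), 0, 0) : Pt)
    ((1 + |omg k|) / 2, (1 + |omg' k|) / 2, |ε|, |ε|)).subset ?_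
  rintro p ⟨hV, hF⟩
  have hx1 := abs_le.1 (x1_eq_s1_add_s2_mul hk p ▸ abs_add_mul_le_of_abs_le_half hF.2.1 hF.2.2.1)
  have hx2 := abs_le.1 (x2_eq_s1_add_s2_mul hk p ▸ abs_add_mul_le_of_abs_le_half hF.2.1 hF.2.2.1)
  have hh1 := hh_le_one_of_mem_Veq hk hc hV
  have hy : ∀ y : ℝ, y ^ 2 ≤ ε ^ 2 * hh p → y ≤ |ε| := fun y hy =>
    (le_abs_self y).trans (sq_le_sq.1 (hy.trans (mul_le_of_le_one_right (sq_nonneg ε) hh1)))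
  exact ⟨⟨hx1.1, hx2.1, hV.1.1.le, hV.1.2.le⟩, ⟨hx1.2, hx2.2, hy _ (sq_le_mul_hh_of_mem_FInf hF).1,
    hy _ (sq_le_mul_hh_of_mem_FInf hF).2⟩⟩

theorem exists_pos_le_hh_of_mem_F0 (hk : Irrational √k)
    (hPID : IsPrincipalIdealRing (R k)) (E : ℝ) :
    ∃ δ > 0, ∀ p ∈ F0 k, y1 p ^ 2 ≤ E * hh p → y2 p ^ 2 ≤ E * hh p → δ ≤ hh p := by
  obtain ⟨Q, hQ⟩ := exists_nat_ge (2 * (1 + |omg k| + |omg' k|))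
  have hQ0 : 0 < Q := by
    have : (0 : ℝ) < Q := lt_of_lt_of_le (by positivity) hQ
    exact_mod_cast this
  have hQ₁ : 2 * (1 + |omg k|) ≤ Q := by linarith [abs_nonneg (omg' k)]
  have hQ₂ : 2 * (1 + |omg' k|) ≤ Q := by linarith [abs_nonneg (omg k)]
  set E' := max E 1
  have hE' : 0 < E' := lt_max_of_lt_right one_pos
  refine ⟨1 / (4 * Q ^ 4 * E'), by positivity, fun p hp hy₁ hy₂ => ?_⟩
  by_contra! hsmall
  obtain ⟨q, m, n, hq0, hqQ, hm, hn⟩ :=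
    exists_int_abs_mul_add_le_and_abs_mul_add_le (s1 k p) (s2 k p) hQ0
  have hq : (q : ℝ) ^ 2 ≤ Q ^ 4 := by
    have : (q : ℝ) ≤ Q ^ 2 := by exact_mod_cast hqQ
    nlinarith [(Int.cast_pos.2 hq0 : (0 : ℝ) < q)]
  have hh0 : 0 ≤ hh p := (mul_pos hp.1.1 hp.1.2).le
  have hy : ∀ y : ℝ, y ^ 2 ≤ E * hh p → (q : ℝ) ^ 2 * y ^ 2 ≤ 1 / 4 := fun y hyE =>
    calc (q : ℝ) ^ 2 * y ^ 2 ≤ Q ^ 4 * (E' * hh p) :=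
          mul_le_mul hq (hyE.trans (mul_le_mul_of_nonneg_right (le_max_left _ _) hh0))
            (sq_nonneg y) (by positivity)
      _ ≤ Q ^ 4 * (E' * (1 / (4 * Q ^ 4 * E'))) := by gcongr
      _ = 1 / 4 := by field_simp
  have hqR : (q : R k) ≠ 0 := fun h => by
    simpa [hq0.ne'] using congrArg (fun z : R k => (z : ℝ × ℝ).1) h
  have hge := one_le_HNorm_of_mem_F0 hk hPID hp (d := m + n * omR k) hqR
  have hle : HNorm (q : R k) (m + n * omR k : R k) p ≤ 1 / 2 * (1 / 2) := by
    simp only [HNorm, Subring.coe_add, Subring.coe_mul, Subring.coe_intCast, omR]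
    exact mul_le_mul (mul_add_sq_add_sq_le_half (x1_eq_s1_add_s2_mul hk p) hQ₁ hm hn (hy _ hy₁))
      (mul_add_sq_add_sq_le_half (x2_eq_s1_add_s2_mul hk p) hQ₂ hm hn (hy _ hy₂))
      (by positivity) (by norm_num)
  linarith

lemma isClosed_Veq_inter_F {cd : R k × R k} {ε δ : ℝ} (hδ : 0 < δ)
    (h : ∀ p ∈ Veq k cd ∩ F k ε, δ ≤ hh p) : IsClosed (Veq k cd ∩ F k ε) := by
  refine isClosed_of_closure_subset fun p hp => ?_
  have hsub : Veq k cd ∩ F k ε ⊆ {p | 0 ≤ y1 p} ∩ {p | 0 ≤ y2 p} ∩ {p | δ ≤ hh p} :=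
    fun q hq => ⟨⟨hq.1.1.1.le, hq.1.1.2.le⟩, h q hq⟩
  obtain ⟨⟨hy1, hy2⟩, hhp⟩ := closure_minimal hsub
    (((isClosed_le continuous_const continuous_y1).inter
      (isClosed_le continuous_const continuous_y2)).inter
      (isClosed_le continuous_const continuous_hh)) hp
  have hHH : p ∈ HH := (pos_and_pos_or_neg_and_neg_of_mul_pos (hδ.trans_le hhp)).resolve_right
    fun hneg => hy1.not_gt hneg.1
  have closure_le : ∀ {f g : Pt → ℝ}, ContinuousAt f p → ContinuousAt g p →
      (∀ q ∈ Veq k cd ∩ F k ε, f q ≤ g q) → f p ≤ g p :=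
    fun hf hg => hf.continuousWithinAt.closure_le hp hg.continuousWithinAt
  have hrr : ContinuousAt rr p :=
    continuous_y1.continuousAt.div continuous_y2.continuousAt hHH.2.ne'
  have hN : ContinuousAt (HNorm cd.1 cd.2) p := (continuous_HNorm _ _).continuousAt
  refine ⟨⟨hHH, le_antisymm (closure_le hN continuousAt_const fun q hq => hq.1.2.le)
      (closure_le continuousAt_const hN fun q hq => hq.1.2.ge)⟩,
    ⟨hHH, closure_le (by fun_prop) continuousAt_const fun q hq => hq.2.1.2.1,
      closure_le (by fun_prop) continuousAt_const fun q hq => hq.2.1.2.2.1,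
      closure_le continuousAt_const hrr fun q hq => hq.2.1.2.2.2.1,
      closure_le hrr continuousAt_const fun q hq => hq.2.1.2.2.2.2⟩,
    hHH, fun ab hab => closure_le continuousAt_const (continuous_HNorm _ _).continuousAt
      fun q hq => hq.2.2.2 ab hab⟩

end

theorem Veq_inter_F_isCompact_general (k : ℕ) (hk : Squarefree k) (hk1 : 1 < k)
    (e : (R k)ˣ) (hPID : IsPrincipalIdealRing (R k))
    (cd : R k × R k) (hc : cd.1 ≠ 0) :
    IsCompact (Veq k cd ∩ F k (eps k e)) := by
  have hirr := irrational_sqrt_of_squarefree hk hk1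
  obtain ⟨δ, hδ, hδh⟩ := exists_pos_le_hh_of_mem_F0 hirr hPID (eps k e ^ 2)
  have hclosed : IsClosed (Veq k cd ∩ F k (eps k e)) :=
    isClosed_Veq_inter_F hδ fun p ⟨_, hFInf, hF0⟩ =>
      hδh p hF0 (sq_le_mul_hh_of_mem_FInf hFInf).1 (sq_le_mul_hh_of_mem_FInf hFInf).2
  exact Metric.isCompact_of_isClosed_isBounded hclosed <|
    (isBounded_Veq_inter_FInf hirr hc _).subset <|
      Set.inter_subset_inter_right _ Set.inter_subset_left

/-- Assume `R` is a principal ideal domain and let `(c,d) ∈ S` with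
`c ≠ 0`. Then `V_{c,d} ∩ F` is compact. -/
theorem Veq_inter_F_isCompact (k : ℕ) (hk : Squarefree k) (hk1 : 1 < k)
    (e : (R k)ˣ) (he : IsFundUnit k e) (hPID : IsPrincipalIdealRing (R k))
    (cd : R k × R k) (hcd : cd ∈ Spairs k) (hc : cd.1 ≠ 0) :
    IsCompact (Veq k cd ∩ F k (eps k e)) :=
  Veq_inter_F_isCompact_general k hk hk1 e hPID cd hc

end Hilbert
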